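/- Let G = G₁G₂ be a matched pair of subgroupoids with factorization maps p₁, p₂ and middle map m = s∘p₁ = r∘p₂. Define, for functions f on G₂ and composable pairs (g₂, g₁) ∈ G₂ × G₁ with s(g₂) = r(g₁), 𝔞(f)(g₂,g₁) = f(p₂(g₂g₁)). Then 𝔞 satisfies the action coassociativity: for all (g₂, g₁, h₁) with s(g₂) = r(g₁), s(g₁) = r(h₁), f(p₂(p₂(g₂g₁)h₁)) = f(p₂(g₂g₁h₁)); equivalently p₂(p₂(g₂g₁)h₁) = p₂(g₂g₁h₁). -/

import Mathlib

/-- A groupoid presented algebraically: a set of arrows with source `s`, range `r`,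
a (total) multiplication which is only meaningful on composable pairs (`s x = r y`),
and inversion. Units are the elements in the range of `s`. -/
structure PreGroupoid (G : Type*) where
  s : G → G
  r : G → G
  mul : G → G → G
  inv : G → G
  s_s : ∀ x, s (s x) = s x
  r_s : ∀ x, r (s x) = s x
  s_r : ∀ x, s (r x) = r x
  r_r : ∀ x, r (r x) = r x
  r_mul : ∀ x y, s x = r y → r (mul x y) = r x
  s_mul : ∀ x y, s x = r y → s (mul x y) = s y
  mul_assoc' : ∀ x y z, s x = r y → s y = r z → mul (mul x y) z = mul x (mul y z)
  id_left : ∀ x, mul (r x) x = x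
  id_right : ∀ x, mul x (s x) = x
  s_inv : ∀ x, s (inv x) = r x
  r_inv : ∀ x, r (inv x) = s x
  inv_mul : ∀ x, mul (inv x) x = s x
  mul_inv : ∀ x, mul x (inv x) = r x

namespace PreGroupoid

variable {G : Type*}

/-- The set of units `G⁰` of the groupoid. -/
def units (Gp : PreGroupoid G) : Set G := Set.range Gp.s

/-- A subgroupoid: contains all units, closed under composable products and inverses. -/
structure IsSubgroupoid (Gp : PreGroupoid G) (S : Set G) : Prop where
  unit_mem : ∀ x, Gp.s x ∈ S
  mul_mem : ∀ {x y}, x ∈ S → y ∈ S → Gp.s x = Gp.r y → Gp.mul x y ∈ S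
  inv_mem : ∀ {x}, x ∈ S → Gp.inv x ∈ S

/-- `p₁, p₂` factor every element of `G` as a composable product `g = p₁(g) p₂(g)`
with `p₁(g) ∈ G₁` and `p₂(g) ∈ G₂`. -/
def IsFactorization (Gp : PreGroupoid G) (G₁ G₂ : Set G) (p₁ p₂ : G → G) : Prop :=
  ∀ g, p₁ g ∈ G₁ ∧ p₂ g ∈ G₂ ∧ Gp.s (p₁ g) = Gp.r (p₂ g) ∧ Gp.mul (p₁ g) (p₂ g) = g

/-- Uniqueness of composable factorizations with first factor in `G₁`, second in `G₂`. -/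
def UniqueFactorization (Gp : PreGroupoid G) (G₁ G₂ : Set G) : Prop :=
  ∀ g₁ g₂ h₁ h₂, g₁ ∈ G₁ → g₂ ∈ G₂ → h₁ ∈ G₁ → h₂ ∈ G₂ →
    Gp.s g₁ = Gp.r g₂ → Gp.s h₁ = Gp.r h₂ →
    Gp.mul g₁ g₂ = Gp.mul h₁ h₂ → g₁ = h₁ ∧ g₂ = h₂

end PreGroupoid

/-! A factorization `x = p₁(x) p₂(x)` followed by a second one of `p₂(x) h` gives
`x h = (p₁(x) p₁(p₂(x) h)) p₂(p₂(x) h)`, a factorization of `x h` whose first factor lies in `G₁`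
because `G₁` is closed under products. Uniqueness of factorizations, which follows from
`G₁ ∩ G₂ = G⁰`, then forces `p₂(x h) = p₂(p₂(x) h)`. -/

namespace PreGroupoid

variable {G : Type*} (Gp : PreGroupoid G)

theorem inv_mul_cancel_left {x y : G} (hxy : Gp.s x = Gp.r y) :
    Gp.mul (Gp.inv x) (Gp.mul x y) = y := by
  rw [← Gp.mul_assoc' _ _ _ (Gp.s_inv x) hxy, Gp.inv_mul, hxy, Gp.id_left]

theorem mul_inv_cancel_right {x y : G} (hxy : Gp.s x = Gp.r y) :
    Gp.mul (Gp.mul x y) (Gp.inv y) = x := by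
  rw [Gp.mul_assoc' _ _ _ hxy (Gp.r_inv y).symm, Gp.mul_inv, ← hxy, Gp.id_right]

theorem mul_inv_cancel_left {x y : G} (hxy : Gp.r x = Gp.r y) :
    Gp.mul x (Gp.mul (Gp.inv x) y) = y := by
  rw [← Gp.mul_assoc' _ _ _ (Gp.r_inv x).symm (by rw [Gp.s_inv, hxy]), Gp.mul_inv, hxy,
    Gp.id_left]

theorem mul_eq_left_of_mem_units {x u : G} (hu : u ∈ Gp.units) (hxu : Gp.s x = Gp.r u) :
    Gp.mul x u = x := by
  obtain ⟨w, rfl⟩ := hu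
  rw [← Gp.r_s w, ← hxu, Gp.id_right]

theorem mul_eq_right_of_mem_units {u y : G} (hu : u ∈ Gp.units) (huy : Gp.s u = Gp.r y) :
    Gp.mul u y = y := by
  obtain ⟨w, rfl⟩ := hu
  rw [Gp.s_s] at huy
  rw [huy, Gp.id_left]

variable {Gp} {G₁ G₂ : Set G}

theorem uniqueFactorization_of_inter_subset_units (h₁ : Gp.IsSubgroupoid G₁)
    (h₂ : Gp.IsSubgroupoid G₂) (hinter : G₁ ∩ G₂ ⊆ Gp.units) :
    Gp.UniqueFactorization G₁ G₂ := by
  intro g₁ g₂ k₁ k₂ hg₁ hg₂ hk₁ hk₂ hg hk heq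
  have hr : Gp.r g₁ = Gp.r k₁ := by
    rw [← Gp.r_mul _ _ hg, heq, Gp.r_mul _ _ hk]
  -- `u = k₁⁻¹ g₁ = k₂ g₂⁻¹` lies in `G₁ ∩ G₂`, hence is a unit.
  set u := Gp.mul (Gp.inv k₁) g₁
  have hcomp : Gp.s (Gp.inv k₁) = Gp.r g₁ := by rw [Gp.s_inv, hr]
  have hsu : Gp.s u = Gp.r g₂ := by rw [Gp.s_mul _ _ hcomp, hg]
  have hru : Gp.r u = Gp.s k₁ := by rw [Gp.r_mul _ _ hcomp, Gp.r_inv]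
  have hug₂ : Gp.mul u g₂ = k₂ := by
    rw [Gp.mul_assoc' _ _ _ hcomp hg, heq, Gp.inv_mul_cancel_left hk]
  have hu₂ : u = Gp.mul k₂ (Gp.inv g₂) := by
    rw [← hug₂, Gp.mul_inv_cancel_right hsu]
  have hunit : u ∈ Gp.units := hinter
    ⟨h₁.mul_mem (h₁.inv_mem hk₁) hg₁ hcomp,
      hu₂ ▸ h₂.mul_mem hk₂ (h₂.inv_mem hg₂) (by rw [Gp.r_inv, ← hug₂, Gp.s_mul _ _ hsu])⟩
  constructor
  · rw [← Gp.mul_eq_left_of_mem_units hunit hru.symm, Gp.mul_inv_cancel_left hr.symm]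
  · rw [← hug₂, Gp.mul_eq_right_of_mem_units hunit hsu]

variable {p₁ p₂ : G → G}

theorem IsFactorization.p₂_mul (hfact : Gp.IsFactorization G₁ G₂ p₁ p₂)
    (huniq : Gp.UniqueFactorization G₁ G₂) {a b : G} (ha : a ∈ G₁) (hb : b ∈ G₂)
    (hab : Gp.s a = Gp.r b) : p₂ (Gp.mul a b) = b := by
  obtain ⟨hc, hd, hcd, hmul⟩ := hfact (Gp.mul a b)
  exact (huniq _ _ _ _ ha hb hc hd hab hcd hmul.symm).2.symm

theorem IsFactorization.p₂_mul_p₂_mul (hfact : Gp.IsFactorization G₁ G₂ p₁ p₂)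
    (huniq : Gp.UniqueFactorization G₁ G₂) (hG₁ : Gp.IsSubgroupoid G₁) {x h : G}
    (hxh : Gp.s x = Gp.r h) : p₂ (Gp.mul (p₂ x) h) = p₂ (Gp.mul x h) := by
  obtain ⟨ha, -, hab, hx⟩ := hfact x
  obtain ⟨hc, hd, hcd, hy⟩ := hfact (Gp.mul (p₂ x) h)
  have hbh : Gp.s (p₂ x) = Gp.r h := by rw [← hxh, ← Gp.s_mul _ _ hab, hx]
  have hac : Gp.s (p₁ x) = Gp.r (p₁ (Gp.mul (p₂ x) h)) := by
    rw [hab, ← Gp.r_mul _ _ hcd, hy, Gp.r_mul _ _ hbh]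
  have hxh_eq : Gp.mul x h =
      Gp.mul (Gp.mul (p₁ x) (p₁ (Gp.mul (p₂ x) h))) (p₂ (Gp.mul (p₂ x) h)) := by
    rw [Gp.mul_assoc' _ _ _ hac hcd, hy, ← Gp.mul_assoc' _ _ _ hab hbh, hx]
  rw [hxh_eq, hfact.p₂_mul huniq (hG₁.mul_mem ha hc hac) hd (by rw [Gp.s_mul _ _ hac, hcd])]

end PreGroupoid

/-- coassociativity of the action: f(p2(p2(g2 g1) h1)) = f(p2(g2 g1 h1)),
equivalently p2(p2(g2 g1) h1) = p2(g2 g1 h1). -/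
theorem stmt14 {G : Type*} (Gp : PreGroupoid G) (G₁ G₂ : Set G)
    (h1 : Gp.IsSubgroupoid G₁) (h2 : Gp.IsSubgroupoid G₂)
    (hinter : G₁ ∩ G₂ = Gp.units)
    (p₁ p₂ : G → G)
    (hfact : Gp.IsFactorization G₁ G₂ p₁ p₂) :
    ∀ g₂ g₁ h₁, g₂ ∈ G₂ → g₁ ∈ G₁ → h₁ ∈ G₁ →
      Gp.s g₂ = Gp.r g₁ → Gp.s g₁ = Gp.r h₁ →
      (∀ f : G → ℂ, f (p₂ (Gp.mul (p₂ (Gp.mul g₂ g₁)) h₁)) =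
        f (p₂ (Gp.mul (Gp.mul g₂ g₁) h₁))) ∧
      p₂ (Gp.mul (p₂ (Gp.mul g₂ g₁)) h₁) = p₂ (Gp.mul (Gp.mul g₂ g₁) h₁) := by
  intro g₂ g₁ h₁ _ _ _ hg hg₁
  have huniq := PreGroupoid.uniqueFactorization_of_inter_subset_units h1 h2 hinter.subset
  have key := hfact.p₂_mul_p₂_mul huniq h1 (by rw [Gp.s_mul _ _ hg, hg₁])
  exact ⟨fun f => congrArg f key, key⟩
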